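/- arXiv:2010.08378 — 3 statements merged into one kernel-verified Lean document; each statement's English description precedes it below -/
import Mathlib

section
/- Let (f_1,...,f_s) be a coherently Z-separating tuple in a proper ideal I of P = K[x_1,...,x_n], let σ be a term ordering with z_i = LT_σ(f_i) for i = 1,...,s, and let P̂ = K[X∖Z]. Then I has a σ-Gröbner basis of the form { (1/c_1)f_1, ..., (1/c_s)f_s, g_1, ..., g_t } where {g_1,...,g_t} is the reduced Gröbner basis of the elimination ideal I ∩ P̂ with respect to the restriction of σ to P̂. -/
/-!
Since `LT_σ(f_i) = z_i` and `z_i` occurs in no other term of any `f_j`, reducing by the monic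
`f_i / c_i` amounts to the substitution `z_i ↦ tail_{z_i}(f_i)`: it maps `I` into `I ∩ K[X∖Z]`
and never raises a term. Hence a nonzero `p ∈ I` either has its leading term divisible by some
`z_i`, or keeps its leading term under the substitution and lands in `I ∩ K[X∖Z]`, where the
reduced Gröbner basis takes over. That basis exists because `I ∩ K[X∖Z]` is a subspace closed
under multiplication by `Z`-free polynomials: its element with leading monomial `d` is `X^d`
minus the normal form of `X^d`, for `d` running over the finitely many (Dickson) minimal
leading monomials.
-/

open MvPolynomial

/-- A term ordering on the monomials of `K[x_1,...,x_n]`: a linear order on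
exponent vectors compatible with addition and with `1` as smallest term. -/
structure TermOrder (n : ℕ) where
  le : (Fin n →₀ ℕ) → (Fin n →₀ ℕ) → Prop
  le_refl : ∀ m, le m m
  le_trans : ∀ a b c, le a b → le b c → le a c
  le_antisymm : ∀ a b, le a b → le b a → a = b
  le_total : ∀ a b, le a b ∨ le b a
  add_le_add : ∀ a b c, le a b → le (a + c) (b + c)
  zero_le : ∀ m, le 0 m

variable {K : Type*} [Field K] {n s : ℕ}

/-- `m` is the `σ`-leading term of `f`. -/
def TermOrder.IsLeadingTerm (σ : TermOrder n) (f : MvPolynomial (Fin n) K)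
    (m : Fin n →₀ ℕ) : Prop :=
  m ∈ f.support ∧ ∀ m' ∈ f.support, σ.le m' m

/-- `G` is a `σ`-Gröbner basis of the set `S` (typically an ideal or an
elimination ideal): `G ⊆ S` and the leading term of every nonzero element of `S`
is divisible by the leading term of some element of `G`. -/
def IsGBOn (σ : TermOrder n) (S G : Set (MvPolynomial (Fin n) K)) : Prop :=
  G ⊆ S ∧ ∀ f ∈ S, f ≠ 0 → ∃ g ∈ G, ∃ mg mf, σ.IsLeadingTerm g mg ∧
    σ.IsLeadingTerm f mf ∧ mg ≤ mf

/-- `G` is the reduced `σ`-Gröbner basis of `S`: a monic, fully interreduced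
`σ`-Gröbner basis. -/
def IsReducedGBOn (σ : TermOrder n) (S G : Set (MvPolynomial (Fin n) K)) : Prop :=
  IsGBOn σ S G ∧
  (∀ g ∈ G, ∃ m, σ.IsLeadingTerm g m ∧ MvPolynomial.coeff m g = 1) ∧
  (∀ g ∈ G, ∀ m ∈ g.support, ∀ g' ∈ G, ∀ m', σ.IsLeadingTerm g' m' → m' ≤ m →
    g' = g ∧ m' = m)

/-- The indeterminate `z` divides some term in the support of `f`. -/
def Occurs (z : Fin n) (f : MvPolynomial (Fin n) K) : Prop :=
  ∃ m ∈ f.support, m z ≠ 0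

/-- `tail_z(f) = z - (1/c) f`, where `c` is the coefficient of `z` in `f`. -/
noncomputable def tailTo (f : MvPolynomial (Fin n) K) (z : Fin n) :
    MvPolynomial (Fin n) K :=
  X z - (MvPolynomial.coeff (Finsupp.single z 1) f)⁻¹ • f

/-- `f` is `z`-separating: the coefficient of `z` in `f` is nonzero and `z`
divides no term in the support of `tail_z(f)`. -/
def IsSeparating (f : MvPolynomial (Fin n) K) (z : Fin n) : Prop :=
  MvPolynomial.coeff (Finsupp.single z 1) f ≠ 0 ∧ ¬ Occurs z (tailTo f z)

/-- `(f_1,...,f_s)` is coherently `Z`-separating for `Z = {z_1,...,z_s}`. -/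
def CoherentlySeparating (z : Fin s → Fin n) (f : Fin s → MvPolynomial (Fin n) K) : Prop :=
  Function.Injective z ∧ (∀ i, f i ≠ 0 ∧ IsSeparating (f i) (z i)) ∧
  ∀ i j, j ≠ i → ¬ Occurs (z i) (f j)

/-- The `M`-linear part of `f` for `M = ⟨x_1-a_1,...,x_n-a_n⟩`. -/
noncomputable def linPart (a : Fin n → K) (f : MvPolynomial (Fin n) K) :
    MvPolynomial (Fin n) K :=
  (MvPolynomial.aeval fun i => X i - C (a i))
    (MvPolynomial.homogeneousComponent 1 ((MvPolynomial.aeval fun i => X i + C (a i)) f))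

/-- The `M`-linear part of an ideal `I`: the `K`-span of `{Lin_M(f) : f ∈ I}`. -/
noncomputable def linSpace (a : Fin n → K) (I : Ideal (MvPolynomial (Fin n) K)) :
    Submodule K (MvPolynomial (Fin n) K) :=
  Submodule.span K (linPart a '' (I : Set (MvPolynomial (Fin n) K)))

/-- The linear maximal ideal `M = ⟨x_1-a_1,...,x_n-a_n⟩`. -/
noncomputable def linMaxIdeal (a : Fin n → K) : Ideal (MvPolynomial (Fin n) K) :=
  Ideal.span (Set.range fun i => X i - C (a i))

/-- `M_1`, the `K`-vector space spanned by `x_1-a_1,...,x_n-a_n`. -/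
noncomputable def linForms (a : Fin n → K) : Submodule K (MvPolynomial (Fin n) K) :=
  Submodule.span K (Set.range fun i => X i - C (a i))

/-- The elimination ideal `I ∩ K[X∖Z]`, viewed as the set of polynomials of `I`
in which no indeterminate of `Z` occurs. -/
def elimSet (z : Fin s → Fin n) (I : Ideal (MvPolynomial (Fin n) K)) :
    Set (MvPolynomial (Fin n) K) :=
  {p | p ∈ I ∧ ∀ i, ¬ Occurs (z i) p}

/-- `r` is the normal form of `p` with respect to (the reduced Gröbner basis of)
`S`: `p - r ∈ S` and no term of `r` is divisible by a leading term of `S`. -/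
def IsNormalFormOn (σ : TermOrder n) (S : Set (MvPolynomial (Fin n) K))
    (p r : MvPolynomial (Fin n) K) : Prop :=
  p - r ∈ S ∧ ∀ f ∈ S, f ≠ 0 → ∀ mf m, σ.IsLeadingTerm f mf → m ∈ r.support → ¬ mf ≤ m

/-- `σ` is a `Z`-separating term ordering for `I`. -/
def IsZSepOrder (σ : TermOrder n) (z : Fin s → Fin n)
    (I : Ideal (MvPolynomial (Fin n) K)) : Prop :=
  ∃ p : Fin s → MvPolynomial (Fin n) K,
    (∀ i, p i ∈ I ∧ p i ≠ 0 ∧ σ.IsLeadingTerm (p i) (Finsupp.single (z i) 1)) ∧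
    CoherentlySeparating z p

open Classical in
/-- The substitution `x_i ↦ x_i` for `x_i ∉ Z` and `z_j ↦ tail_{z_j}(f_j)`. -/
noncomputable def subMap (z : Fin s → Fin n) (f : Fin s → MvPolynomial (Fin n) K)
    (i : Fin n) : MvPolynomial (Fin n) K :=
  if h : ∃ j, z j = i then tailTo (f h.choose) (z h.choose) else X i

open Classical in
/-- The projection of `P` onto `P̂ = K[X∖Z]`. -/
noncomputable def killZ (z : Fin s → Fin n) :
    MvPolynomial (Fin n) K →ₐ[K] MvPolynomial {i : Fin n // ¬ ∃ j, z j = i} K :=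
  MvPolynomial.aeval fun i => if h : ∃ j, z j = i then 0 else X ⟨i, h⟩

/-- The elimination ideal `I ∩ P̂` as an ideal of `P̂ = K[X∖Z]`. -/
noncomputable def elimIdeal (z : Fin s → Fin n) (I : Ideal (MvPolynomial (Fin n) K)) :
    Ideal (MvPolynomial {i : Fin n // ¬ ∃ j, z j = i} K) :=
  Ideal.comap (MvPolynomial.rename
    (Subtype.val : {i : Fin n // ¬ ∃ j, z j = i} → Fin n)).toRingHom I

/-- The composition `ψ : P → P̂ → P̂/(I ∩ P̂)` of the substitution
`z_j ↦ tail_{z_j}(f_j)` with the canonical projection. -/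
noncomputable def reembedHom (z : Fin s → Fin n) (f : Fin s → MvPolynomial (Fin n) K)
    (I : Ideal (MvPolynomial (Fin n) K)) :
    MvPolynomial (Fin n) K →+*
      (MvPolynomial {i : Fin n // ¬ ∃ j, z j = i} K ⧸ elimIdeal z I) :=
  (Ideal.Quotient.mk (elimIdeal z I)).comp
    (((killZ z).comp (MvPolynomial.aeval (subMap z f))).toRingHom)

/-- The cotangent space `m/m²` as a `K`-vector space. -/
abbrev cotSpace (K : Type*) [Field K] {R : Type*} [CommRing R] [Algebra K R]
    (m : Ideal R) :=
  (m.restrictScalars K) ⧸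
    Submodule.comap (Submodule.subtype (m.restrictScalars K)) ((m ^ 2).restrictScalars K)

/-- The embedding dimension of an affine `K`-algebra `R`: the minimal number `m`
of indeterminates of a presentation `R ≅ K[y_1,...,y_m]/I'`. -/
noncomputable def edim (K : Type*) [Field K] (R : Type*) [CommRing R] [Algebra K R] : ℕ :=
  sInf {m | ∃ I' : Ideal (MvPolynomial (Fin m) K),
    Nonempty (R ≃ₐ[K] (MvPolynomial (Fin m) K ⧸ I'))}

/-- A marked reduced Gröbner basis of `I`: a reduced `σ`-Gröbner basis together
with the marking of the `σ`-leading term of each element. -/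
def IsMarkedReducedGB (I : Ideal (MvPolynomial (Fin n) K))
    (G : Set ((Fin n →₀ ℕ) × MvPolynomial (Fin n) K)) : Prop :=
  ∃ σ : TermOrder n, IsReducedGBOn σ (I : Set (MvPolynomial (Fin n) K)) (Prod.snd '' G) ∧
    ∀ p ∈ G, σ.IsLeadingTerm p.2 p.1

namespace MvPolynomial

theorem aeval_monomial_of_forall_eq_X {ι R : Type*} [CommSemiring R] {φ : ι → MvPolynomial ι R}
    {d : ι →₀ ℕ} (hd : ∀ i ∈ d.support, φ i = X i) (c : R) :
    aeval φ (monomial d c) = monomial d c := by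
  rw [aeval_monomial, monomial_eq, algebraMap_eq]
  exact congrArg _ (Finsupp.prod_congr fun i hi => by rw [hd i hi])

theorem support_subset_of_mem_supported {ι R : Type*} [CommSemiring R] {Y : Set ι}
    {p : MvPolynomial ι R} (hp : p ∈ supported R Y) {e : ι →₀ ℕ} (he : e ∈ p.support) :
    ↑e.support ⊆ Y :=
  fun i hi => mem_supported.mp hp ((mem_vars_iff_mem_support i).mpr ⟨e, he, hi⟩)

theorem sub_aeval_mem {ι R : Type*} [CommRing R] {I : Ideal (MvPolynomial ι R)}
    {φ : ι → MvPolynomial ι R} (h : ∀ i, X i - φ i ∈ I) (p : MvPolynomial ι R) :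
    p - aeval φ p ∈ I := by
  have hcomp : (Ideal.Quotient.mkₐ R I).comp (aeval φ) = Ideal.Quotient.mkₐ R I :=
    algHom_ext fun i => by
      rw [AlgHom.comp_apply, aeval_X, Ideal.Quotient.mkₐ_eq_mk, Ideal.Quotient.eq, ← neg_sub]
      exact I.neg_mem (h i)
  exact Ideal.Quotient.eq.mp (DFunLike.congr_fun hcomp p).symm

theorem aeval_mem_of_forall_mem {ι R A : Type*} [CommSemiring R] [CommSemiring A] [Algebra R A]
    {S : Subalgebra R A} {φ : ι → A} (h : ∀ i, φ i ∈ S) (p : MvPolynomial ι R) :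
    aeval φ p ∈ S := by
  have hle : (aeval φ).range ≤ S := by
    rw [aeval_range]
    exact Algebra.adjoin_le (Set.range_subset_iff.mpr h)
  exact hle ⟨p, rfl⟩

end MvPolynomial

namespace TermOrder

variable (σ : TermOrder n)

/-- `Fin n →₀ ℕ` ordered by `σ`; it carries `σ` into Mathlib's `MonomialOrder` API. -/
def Syn (_σ : TermOrder n) : Type := Fin n →₀ ℕ

noncomputable instance : AddCommMonoid σ.Syn := inferInstanceAs (AddCommMonoid (Fin n →₀ ℕ))

noncomputable instance : LinearOrder σ.Syn where
  le := σ.le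
  le_refl := σ.le_refl
  le_trans := σ.le_trans
  le_antisymm := σ.le_antisymm
  le_total := σ.le_total
  toDecidableLE := Classical.decRel _

instance : IsOrderedAddMonoid σ.Syn where
  add_le_add_left a b h c := σ.add_le_add a b c h

theorem le_of_le {a b : Fin n →₀ ℕ} (h : a ≤ b) : σ.le a b := by
  obtain ⟨c, rfl⟩ := le_iff_exists_add.mp h
  simpa [add_comm] using σ.add_le_add 0 c a (σ.zero_le c)

instance : WellQuasiOrderedLE σ.Syn :=
  Monotone.wellQuasiOrderedLE_of_wellQuasiOrderedLE_of_surjective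
    (f := fun a : Fin n →₀ ℕ => (a : σ.Syn)) (fun _ _ => σ.le_of_le) Function.surjective_id

noncomputable def toMonomialOrder : MonomialOrder (Fin n) where
  syn := σ.Syn
  toSyn := AddEquiv.refl _
  toSyn_monotone _ _ := σ.le_of_le

theorem isLeadingTerm_iff {f : MvPolynomial (Fin n) K} {d : Fin n →₀ ℕ} :
    σ.IsLeadingTerm f d ↔ f ≠ 0 ∧ σ.toMonomialOrder.degree f = d := by
  constructor
  · rintro ⟨hd, hmax⟩
    have hf : f ≠ 0 := ne_zero_iff.mpr ⟨d, mem_support_iff.mp hd⟩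
    exact ⟨hf, σ.le_antisymm _ _ (hmax _ (σ.toMonomialOrder.degree_mem_support hf))
      (σ.toMonomialOrder.le_degree hd)⟩
  · rintro ⟨hf, rfl⟩
    exact ⟨σ.toMonomialOrder.degree_mem_support hf, fun _ => σ.toMonomialOrder.le_degree⟩

theorem isLeadingTerm_unique {f : MvPolynomial (Fin n) K}
    {d d' : Fin n →₀ ℕ} (h : σ.IsLeadingTerm f d) (h' : σ.IsLeadingTerm f d') : d = d' :=
  σ.le_antisymm _ _ (h'.2 d h.1) (h.2 d' h'.1)

theorem isLeadingTerm_smul_iff {c : K} (hc : c ≠ 0)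
    {f : MvPolynomial (Fin n) K} {d : Fin n →₀ ℕ} :
    σ.IsLeadingTerm (c • f) d ↔ σ.IsLeadingTerm f d := by
  simp only [IsLeadingTerm, support_smul_eq hc]

end TermOrder

namespace MonomialOrder

open scoped MonomialOrder

variable {ι : Type*} (m : MonomialOrder ι)

section CommSemiring

variable {R : Type*} [CommSemiring R] {φ : ι → MvPolynomial ι R}

theorem degree_lt_of_coeff_eq_zero {q : MvPolynomial ι R} {d : ι →₀ ℕ}
    (hle : m.degree q ≼[m] d) (hd : coeff d q = 0) (hq : q ≠ 0) : m.degree q ≺[m] d :=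
  lt_of_le_of_ne hle fun h => m.coeff_degree_ne_zero_iff.mpr hq (m.toSyn.injective h ▸ hd)

theorem degree_aeval_monomial_le (hφ : ∀ i, m.degree (φ i) ≼[m] Finsupp.single i 1)
    (d : ι →₀ ℕ) (c : R) : m.degree (aeval φ (monomial d c)) ≼[m] d := by
  rw [aeval_monomial, algebraMap_eq]
  calc m.toSyn (m.degree (C c * d.prod fun i k => φ i ^ k))
      ≤ m.toSyn (m.degree (C c : MvPolynomial ι R) + m.degree (∏ i ∈ d.support, φ i ^ d i)) :=
        m.degree_mul_le
    _ ≤ m.toSyn (∑ i ∈ d.support, m.degree (φ i ^ d i)) := by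
        rw [degree_C, zero_add]; exact m.degree_prod_le
    _ ≤ m.toSyn (∑ i ∈ d.support, d i • Finsupp.single i 1) := by
        simp only [map_sum]
        refine Finset.sum_le_sum fun i _ => (m.degree_pow_le _).trans ?_
        simpa only [map_nsmul] using nsmul_le_nsmul_right (hφ i) _
    _ = m.toSyn d := by
        simp only [Finsupp.smul_single, smul_eq_mul, mul_one]
        exact congrArg _ d.sum_single

theorem degree_aeval_le (hφ : ∀ i, m.degree (φ i) ≼[m] Finsupp.single i 1)
    (p : MvPolynomial ι R) : m.degree (aeval φ p) ≼[m] m.degree p := by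
  conv_lhs => rw [p.as_sum, map_sum]
  exact m.degree_sum_le.trans
    (Finset.sup_le fun d hd => (m.degree_aeval_monomial_le hφ d _).trans (m.le_degree hd))

end CommSemiring

theorem degree_aeval_eq {φ : ι → MvPolynomial ι K}
    (hφ : ∀ i, m.degree (φ i) ≼[m] Finsupp.single i 1) {p : MvPolynomial ι K}
    (hfix : ∀ i ∈ (m.degree p).support, φ i = X i) :
    m.degree (aeval φ p) = m.degree p ∧ m.leadingCoeff (aeval φ p) = m.leadingCoeff p := by
  by_cases hd0 : m.degree p = 0
  · rw [m.eq_C_of_degree_eq_zero hd0, aeval_C, algebraMap_eq]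
    exact ⟨rfl, rfl⟩
  have hsplit : aeval φ p = m.leadingTerm p + aeval φ (m.subLTerm p) := by
    rw [leadingTerm, ← aeval_monomial_of_forall_eq_X hfix, ← map_add, subLTerm, add_sub_cancel]
  have hlt : m.degree (aeval φ (m.subLTerm p)) ≺[m] m.degree (m.leadingTerm p) := by
    rw [degree_leadingTerm]
    exact (m.degree_aeval_le hφ _).trans_lt (degree_sub_LTerm_lt hd0)
  rw [hsplit, m.degree_add_of_lt hlt, m.leadingCoeff_add_of_lt hlt, degree_leadingTerm,
    leadingCoeff_leadingTerm]
  exact ⟨rfl, rfl⟩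

def leadingMonomials (V : Submodule K (MvPolynomial ι K)) : Set (ι →₀ ℕ) :=
  {d | ∃ p ∈ V, p ≠ 0 ∧ m.degree p = d}

theorem exists_normalForm (V : Submodule K (MvPolynomial ι K)) (q : MvPolynomial ι K) :
    ∃ r, q - r ∈ V ∧ ∀ d ∈ r.support, d ∉ m.leadingMonomials V := by
  classical
  induction hq : m.toSyn (m.degree q) using WellFoundedLT.induction generalizing q with
  | _ a ih =>
    set d := m.degree q
    have reduce : ∀ q', m.degree q' ≼[m] d → coeff d q' = 0 →
        ∃ r, q' - r ∈ V ∧ ∀ e ∈ r.support, e ∉ m.leadingMonomials V := by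
      intro q' hle hd
      by_cases hq' : q' = 0
      · exact ⟨0, by simp [hq'], by simp⟩
      · exact ih _ (hq ▸ m.degree_lt_of_coeff_eq_zero hle hd hq') q' rfl
    by_cases hdV : d ∈ m.leadingMonomials V
    · obtain ⟨p, hpV, hp0, hpd⟩ := hdV
      set c := m.leadingCoeff q / m.leadingCoeff p
      have hc : coeff d (q - c • p) = 0 := by
        simp only [coeff_sub, coeff_smul, smul_eq_mul, c, leadingCoeff, d, ← hpd]
        rw [div_mul_cancel₀ _ (m.coeff_degree_ne_zero_iff.mpr hp0), sub_self]
      obtain ⟨r, hr, hrV⟩ := reduce (q - c • p)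
        (m.degree_sub_le.trans (sup_le le_rfl (m.degree_smul_le.trans (hpd ▸ le_rfl)))) hc
      have := V.add_mem hr (V.smul_mem c hpV)
      rw [sub_right_comm, sub_add_cancel] at this
      exact ⟨r, this, hrV⟩
    · obtain ⟨r, hr, hrV⟩ := reduce (m.subLTerm q) (degree_sub_LTerm_le q)
        (by simp [subLTerm, d, leadingCoeff])
      refine ⟨monomial d (m.leadingCoeff q) + r, by simpa [subLTerm, sub_sub] using hr, ?_⟩
      intro e he
      rcases Finset.mem_union.mp (support_add he) with he | he
      · rwa [Finset.mem_singleton.mp (support_monomial_subset he)]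
      · exact hrV e he

theorem coeff_and_degree_monomial_sub {V : Submodule K (MvPolynomial ι K)} {d : ι →₀ ℕ}
    (hd : d ∈ m.leadingMonomials V) {r : MvPolynomial ι K} (hr : monomial d 1 - r ∈ V)
    (hrV : ∀ e ∈ r.support, e ∉ m.leadingMonomials V) :
    coeff d (monomial d 1 - r) = 1 ∧ m.degree (monomial d 1 - r) = d := by
  classical
  have hcoeff : coeff d (monomial d 1 - r) = 1 := by
    rw [coeff_sub, coeff_monomial, if_pos rfl, notMem_support_iff.mp fun h => hrV d h hd, sub_zero]
  refine ⟨hcoeff, ?_⟩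
  have hg0 : monomial d 1 - r ≠ 0 := fun h => by simp [h] at hcoeff
  rcases Finset.mem_union.mp (support_sub ι _ _ (m.degree_mem_support hg0)) with h | h
  · exact Finset.mem_singleton.mp (support_monomial_subset h)
  · exact absurd ⟨_, hr, hg0, rfl⟩ (hrV _ h)

theorem mem_leadingMonomials_of_le {Y : Set ι} {V : Submodule K (MvPolynomial ι K)}
    (hmul : ∀ a ∈ supported K Y, ∀ p ∈ V, a * p ∈ V) {d e : ι →₀ ℕ}
    (hd : d ∈ m.leadingMonomials V) (hde : d ≤ e) (he : ↑e.support ⊆ Y) :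
    e ∈ m.leadingMonomials V := by
  classical
  obtain ⟨p, hpV, hp0, rfl⟩ := hd
  have hmon : monomial (e - m.degree p) (1 : K) ≠ 0 := by simp
  refine ⟨monomial (e - m.degree p) 1 * p, hmul _ ?_ p hpV, mul_ne_zero hmon hp0, ?_⟩
  · rw [mem_supported, vars_monomial one_ne_zero]
    exact (Finset.coe_subset.mpr Finsupp.support_tsub).trans he
  · rw [m.degree_mul hmon hp0, degree_monomial, if_neg one_ne_zero, tsub_add_cancel_of_le hde]

end MonomialOrder

theorem exists_isReducedGBOn (σ : TermOrder n) {Y : Set (Fin n)}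
    (V : Submodule K (MvPolynomial (Fin n) K)) (hVs : ∀ p ∈ V, p ∈ supported K Y)
    (hmul : ∀ a ∈ supported K Y, ∀ p ∈ V, a * p ∈ V) :
    ∃ (t : ℕ) (g : Fin t → MvPolynomial (Fin n) K), IsReducedGBOn σ V (Set.range g) := by
  set m := σ.toMonomialOrder
  set L := m.leadingMonomials V
  choose r hrV hrL using fun d => m.exists_normalForm V (monomial d 1)
  set gen := fun d => monomial d (1 : K) - r d
  have hgen : ∀ d ∈ L, coeff d (gen d) = 1 ∧ σ.IsLeadingTerm (gen d) d := fun d hd => by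
    obtain ⟨h1, h2⟩ := m.coeff_and_degree_monomial_sub hd (hrV d) (hrL d)
    exact ⟨h1, σ.isLeadingTerm_iff.mpr ⟨fun h => by simp [gen, h] at h1, h2⟩⟩
  have hfin : {d | Minimal (· ∈ L) d}.Finite :=
    WellQuasiOrderedLE.finite_of_isAntichain (setOfPred_minimal_antichain _)
  obtain ⟨t, e, -, he⟩ := hfin.fin_param
  refine ⟨t, gen ∘ e, ?_⟩
  rw [Set.range_comp, he]
  refine ⟨⟨?_, ?_⟩, ?_, ?_⟩
  · rintro _ ⟨d, -, rfl⟩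
    exact hrV d
  · intro p hpV hp0
    obtain ⟨d, hdp, hd⟩ := exists_minimal_le_of_wellFoundedLT (· ∈ L) _ ⟨p, hpV, hp0, rfl⟩
    exact ⟨gen d, ⟨d, hd, rfl⟩, d, _, (hgen d hd.1).2, σ.isLeadingTerm_iff.mpr ⟨hp0, rfl⟩, hdp⟩
  · rintro _ ⟨d, hd, rfl⟩
    exact ⟨d, (hgen d hd.1).2, (hgen d hd.1).1⟩
  · rintro _ ⟨d, hd, rfl⟩ c hc _ ⟨d', hd', rfl⟩ c' hc' hle
    obtain rfl : c' = d' := σ.isLeadingTerm_unique hc' (hgen d' hd'.1).2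
    by_cases hcd : c = d
    · subst hcd
      obtain rfl : c' = c := le_antisymm hle (hd.2 hd'.1 hle)
      exact ⟨rfl, rfl⟩
    · refine absurd (m.mem_leadingMonomials_of_le hmul hd'.1 hle
        (support_subset_of_mem_supported (hVs _ (hrV d)) hc)) (hrL d c ?_)
      rcases Finset.mem_union.mp (support_sub _ _ _ hc) with h | h
      · exact absurd (Finset.mem_singleton.mp (support_monomial_subset h)) hcd
      · exact h

section Elimination

variable {z : Fin s → Fin n} {f : Fin s → MvPolynomial (Fin n) K}

theorem occurs_iff_mem_vars {i : Fin n} {p : MvPolynomial (Fin n) K} :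
    Occurs i p ↔ i ∈ p.vars := by
  simp [Occurs, mem_vars_iff_mem_support, Finsupp.mem_support_iff]

theorem forall_not_occurs_iff_mem_supported {p : MvPolynomial (Fin n) K} :
    (∀ j, ¬ Occurs (z j) p) ↔ p ∈ supported K (Set.range z)ᶜ := by
  simp only [occurs_iff_mem_vars, mem_supported, Set.subset_def, Finset.mem_coe,
    Set.mem_compl_iff, Set.mem_range, not_exists]
  exact ⟨fun h x hx j hj => h j (hj ▸ hx), fun h j hj => h _ hj j rfl⟩

theorem elimSet_eq (I : Ideal (MvPolynomial (Fin n) K)) :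
    elimSet z I = ↑(I.restrictScalars K ⊓ Subalgebra.toSubmodule (supported K (Set.range z)ᶜ)) := by
  ext p
  simp [elimSet, forall_not_occurs_iff_mem_supported]

theorem exists_isReducedGBOn_elimSet (σ : TermOrder n) (z : Fin s → Fin n)
    (I : Ideal (MvPolynomial (Fin n) K)) :
    ∃ (t : ℕ) (g : Fin t → MvPolynomial (Fin n) K),
      IsReducedGBOn σ (elimSet z I) (Set.range g) := by
  rw [elimSet_eq]
  exact exists_isReducedGBOn σ _ (fun p hp => hp.2)
    fun a ha p hp => ⟨I.mul_mem_left a hp.1, Subalgebra.mul_mem _ ha hp.2⟩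

theorem subMap_eq_X {i : Fin n} (hi : i ∉ Set.range z) : subMap z f i = X i := by
  rw [subMap, dif_neg (show ¬∃ j, z j = i from hi)]

theorem subMap_apply_of_injective (hz : Function.Injective z) (j : Fin s) :
    subMap z f (z j) = tailTo (f j) (z j) := by
  have h : ∃ k, z k = z j := ⟨j, rfl⟩
  rw [subMap, dif_pos h, hz h.choose_spec]

theorem tailTo_mem_supported (hcs : CoherentlySeparating z f) (j : Fin s) :
    tailTo (f j) (z j) ∈ supported K (Set.range z)ᶜ := by
  classical
  rw [← forall_not_occurs_iff_mem_supported]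
  intro k
  rcases eq_or_ne k j with rfl | hkj
  · exact (hcs.2.1 k).2.2
  rw [occurs_iff_mem_vars, tailTo, smul_eq_C_mul]
  intro hk
  rcases Finset.mem_union.mp (vars_sub_subset _ hk) with h | h
  · rw [vars_X, Finset.mem_singleton] at h
    exact hkj (hcs.1 h)
  · rw [vars_C_mul _ (inv_ne_zero (hcs.2.1 j).2.1)] at h
    exact hcs.2.2 k j hkj.symm (occurs_iff_mem_vars.mpr h)

theorem subMap_mem_supported (hcs : CoherentlySeparating z f) (i : Fin n) :
    subMap z f i ∈ supported K (Set.range z)ᶜ := by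
  by_cases hi : i ∈ Set.range z
  · obtain ⟨j, rfl⟩ := hi
    rw [subMap_apply_of_injective hcs.1]
    exact tailTo_mem_supported hcs j
  · rw [subMap_eq_X hi]
    exact X_mem_supported.mpr hi

theorem X_sub_subMap_mem {I : Ideal (MvPolynomial (Fin n) K)} (hz : Function.Injective z)
    (hfI : ∀ j, f j ∈ I) (i : Fin n) : X i - subMap z f i ∈ I := by
  by_cases hi : i ∈ Set.range z
  · obtain ⟨j, rfl⟩ := hi
    rw [subMap_apply_of_injective hz, tailTo, sub_sub_cancel, smul_eq_C_mul]
    exact I.mul_mem_left _ (hfI j)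
  · rw [subMap_eq_X hi, sub_self]
    exact I.zero_mem

open scoped MonomialOrder in
theorem degree_subMap_le (σ : TermOrder n) (hz : Function.Injective z)
    (hlt : ∀ j, σ.IsLeadingTerm (f j) (Finsupp.single (z j) 1)) (i : Fin n) :
    σ.toMonomialOrder.degree (subMap z f i) ≼[σ.toMonomialOrder] Finsupp.single i 1 := by
  by_cases hi : i ∈ Set.range z
  · obtain ⟨j, rfl⟩ := hi
    rw [subMap_apply_of_injective hz, tailTo]
    refine σ.toMonomialOrder.degree_sub_le.trans (sup_le σ.toMonomialOrder.degree_X_le_single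
      (σ.toMonomialOrder.degree_smul_le.trans ?_))
    rw [(σ.isLeadingTerm_iff.mp (hlt j)).2]
  · rw [subMap_eq_X hi]
    exact σ.toMonomialOrder.degree_X_le_single

theorem exists_mem_elimSet_isLeadingTerm {I : Ideal (MvPolynomial (Fin n) K)} (σ : TermOrder n)
    (hfI : ∀ j, f j ∈ I) (hcs : CoherentlySeparating z f)
    (hlt : ∀ j, σ.IsLeadingTerm (f j) (Finsupp.single (z j) 1))
    {p : MvPolynomial (Fin n) K} (hpI : p ∈ I) {d : Fin n →₀ ℕ} (hpd : σ.IsLeadingTerm p d)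
    (hdz : ∀ j, d (z j) = 0) : ∃ p' ∈ elimSet z I, σ.IsLeadingTerm p' d := by
  obtain ⟨hp0, rfl⟩ := σ.isLeadingTerm_iff.mp hpd
  set m := σ.toMonomialOrder
  set p' := aeval (subMap z f) p
  have hp'I : p' ∈ I := by
    simpa only [sub_sub_cancel] using I.sub_mem hpI (sub_aeval_mem (X_sub_subMap_mem hcs.1 hfI) p)
  obtain ⟨hdeg, hlc⟩ := m.degree_aeval_eq (degree_subMap_le σ hcs.1 hlt) (p := p)
    fun i hi => subMap_eq_X (by rintro ⟨j, rfl⟩; exact Finsupp.mem_support_iff.mp hi (hdz j))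
  have hp'0 : p' ≠ 0 := by
    rw [← m.leadingCoeff_ne_zero_iff, hlc, m.leadingCoeff_ne_zero_iff]
    exact hp0
  exact ⟨p', ⟨hp'I, forall_not_occurs_iff_mem_supported.mpr
    (aeval_mem_of_forall_mem (subMap_mem_supported hcs) p)⟩, σ.isLeadingTerm_iff.mpr ⟨hp'0, hdeg⟩⟩

end Elimination

theorem statement8_general (z : Fin s → Fin n) (f : Fin s → MvPolynomial (Fin n) K)
    (I : Ideal (MvPolynomial (Fin n) K))
    (hfI : ∀ i, f i ∈ I ∧ f i ≠ 0)
    (hcs : CoherentlySeparating z f) (σ : TermOrder n)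
    (hlt : ∀ i, σ.IsLeadingTerm (f i) (Finsupp.single (z i) 1)) :
    ∃ (t : ℕ) (g : Fin t → MvPolynomial (Fin n) K),
      IsReducedGBOn σ (elimSet z I) (Set.range g) ∧
      IsGBOn σ (I : Set (MvPolynomial (Fin n) K))
        ((Set.range fun i =>
          (MvPolynomial.coeff (Finsupp.single (z i) 1) (f i))⁻¹ • f i) ∪
          Set.range g) := by
  obtain ⟨t, g, hg⟩ := exists_isReducedGBOn_elimSet σ z I
  refine ⟨t, g, hg, Set.union_subset ?_ fun p hp => (hg.1.1 hp).1, ?_⟩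
  · rintro _ ⟨i, rfl⟩
    exact I.smul_of_tower_mem _ (hfI i).1
  intro p hpI hp0
  obtain ⟨d, hpd⟩ : ∃ d, σ.IsLeadingTerm p d := ⟨_, σ.isLeadingTerm_iff.mpr ⟨hp0, rfl⟩⟩
  by_cases hdz : ∀ j, d (z j) = 0
  · obtain ⟨p', hp'S, hp'd⟩ :=
      exists_mem_elimSet_isLeadingTerm σ (fun j => (hfI j).1) hcs hlt hpI hpd hdz
    obtain ⟨_, ⟨i, rfl⟩, mg, d', hgi, hp'd', hle⟩ := hg.1.2 p' hp'S (σ.isLeadingTerm_iff.mp hp'd).1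
    obtain rfl := σ.isLeadingTerm_unique hp'd' hp'd
    exact ⟨g i, Or.inr ⟨i, rfl⟩, mg, d', hgi, hpd, hle⟩
  · obtain ⟨j, hj⟩ := not_forall.mp hdz
    exact ⟨_, Or.inl ⟨j, rfl⟩, _, d, (σ.isLeadingTerm_smul_iff (inv_ne_zero (hcs.2.1 j).2.1)).mpr
      (hlt j), hpd, Finsupp.single_le_iff.mpr (Nat.one_le_iff_ne_zero.mpr hj)⟩

/-- If a proper ideal `I` contains a coherently `Z`-separating tuple
`(f_1,...,f_s)` and `LT_σ(f_i) = z_i`, then `I` has a `σ`-Gröbner basis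
`{(1/c_1)f_1,...,(1/c_s)f_s, g_1,...,g_t}`, where `{g_1,...,g_t}` is the reduced
Gröbner basis of the elimination ideal `I ∩ K[X∖Z]`. -/
theorem statement8 (z : Fin s → Fin n) (f : Fin s → MvPolynomial (Fin n) K)
    (I : Ideal (MvPolynomial (Fin n) K)) (hI : I ≠ ⊤)
    (hfI : ∀ i, f i ∈ I ∧ f i ≠ 0)
    (hcs : CoherentlySeparating z f) (σ : TermOrder n)
    (hlt : ∀ i, σ.IsLeadingTerm (f i) (Finsupp.single (z i) 1)) :
    ∃ (t : ℕ) (g : Fin t → MvPolynomial (Fin n) K),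
      IsReducedGBOn σ (elimSet z I) (Set.range g) ∧
      IsGBOn σ (I : Set (MvPolynomial (Fin n) K))
        ((Set.range fun i =>
          (MvPolynomial.coeff (Finsupp.single (z i) 1) (f i))⁻¹ • f i) ∪
          Set.range g) :=
  statement8_general z f I hfI hcs σ hlt
end

section
/- Let I ⊆ M = ⟨x_1,...,x_n⟩ be an ideal and σ a Z-separating term ordering for I, where Z = {z_1,...,z_s}. Then the reduced σ-Gröbner basis of I is a Z-separating σ-Gröbner basis of I; that is, it has the form {f_1,...,f_s, g_1,...,g_t} where f_i = z_i - h_i with z_i = LT_σ(f_i), the tuple (f_1,...,f_s) is coherently Z-separating, and {g_1,...,g_t} is the reduced Gröbner basis of I ∩ P̂ with P̂ = K[X∖Z]. -/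
open MvPolynomial

variable {K : Type*} [Field K] {n s : ℕ}

lemma TermOrder.lt_unique (σ : TermOrder n) {f : MvPolynomial (Fin n) K} {m m' : Fin n →₀ ℕ}
    (h : σ.IsLeadingTerm f m) (h' : σ.IsLeadingTerm f m') : m = m' :=
  σ.le_antisymm _ _ (h'.2 m h.1) (h.2 m' h'.1)

lemma single_le_of_ne {m : Fin n →₀ ℕ} {i : Fin n} (h : m i ≠ 0) :
    Finsupp.single i 1 ≤ m :=
  Finsupp.single_le_iff.mpr (Nat.one_le_iff_ne_zero.mpr h)

/-- For a `Z`-separating term ordering `σ` for `I ⊆ M`, the reduced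
`σ`-Gröbner basis of `I` is a `Z`-separating `σ`-Gröbner basis: it is of the form
`{f_1,...,f_s} ∪ G'` with `LT_σ(f_i) = z_i`, `(f_1,...,f_s)` coherently
`Z`-separating, and `G'` the reduced Gröbner basis of `I ∩ K[X∖Z]`. -/
theorem statement9 (z : Fin s → Fin n) (I : Ideal (MvPolynomial (Fin n) K))
    (hI : I ≤ linMaxIdeal (0 : Fin n → K)) (σ : TermOrder n)
    (hσ : IsZSepOrder σ z I) (G : Set (MvPolynomial (Fin n) K))
    (hG : IsReducedGBOn σ (I : Set (MvPolynomial (Fin n) K)) G) :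
    ∃ (f : Fin s → MvPolynomial (Fin n) K) (G' : Set (MvPolynomial (Fin n) K)),
      G = Set.range f ∪ G' ∧
      (∀ i, σ.IsLeadingTerm (f i) (Finsupp.single (z i) 1)) ∧
      CoherentlySeparating z f ∧
      IsReducedGBOn σ (elimSet z I) G' := by
  obtain ⟨p, hp, hzinj, _, _⟩ := hσ
  obtain ⟨⟨hGI, hGB⟩, hmonic, hred⟩ := hG
  -- constant term of elements of I vanishes
  have hconst : ∀ q ∈ I, constantCoeff q = 0 := by
    intro q hq
    have hker : linMaxIdeal (0 : Fin n → K) ≤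
        RingHom.ker (constantCoeff : MvPolynomial (Fin n) K →+* K) := by
      rw [linMaxIdeal, Ideal.span_le]
      rintro _ ⟨i, rfl⟩
      simp [RingHom.mem_ker]
    exact hker (hI hq)
  -- for each i there is g ∈ G with leading term z i
  have key : ∀ i, ∃ g ∈ G, σ.IsLeadingTerm g (Finsupp.single (z i) 1) := by
    intro i
    obtain ⟨hpI, hpne, hplt⟩ := hp i
    obtain ⟨g, hgG, mg, mf, hmg, hmf, hle⟩ := hGB (p i) hpI hpne
    have hmf' : mf = Finsupp.single (z i) 1 := σ.lt_unique hmf hplt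
    subst hmf'
    refine ⟨g, hgG, ?_⟩
    by_cases h0 : mg (z i) = 0
    · exfalso
      have hmg0 : mg = 0 := by
        ext k
        by_cases hk : k = z i
        · subst hk; exact h0
        · have := hle k
          simpa [Finsupp.single_apply, hk, Eq.comm] using this
      have : constantCoeff g ≠ 0 := by
        have := hmg.1
        rw [hmg0] at this
        simpa [constantCoeff_eq, MvPolynomial.mem_support_iff] using this
      exact this (hconst g (hGI hgG))
    · have : mg = Finsupp.single (z i) 1 := by
        ext k
        by_cases hk : k = z i
        · subst hk
          have h1 : mg (z i) ≤ 1 := by simpa [Finsupp.single_apply] using hle (z i)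
          have h2 : 1 ≤ mg (z i) := Nat.one_le_iff_ne_zero.mpr h0
          simpa [Finsupp.single_apply] using le_antisymm h1 h2
        · have := hle k
          simp only [Finsupp.single_apply, if_neg (Ne.symm hk)] at this ⊢
          omega
      exact this ▸ hmg
  choose f hfG hflt using key
  -- f is injective
  have hfinj : Function.Injective f := by
    intro i j hij
    apply hzinj
    have h1 : σ.IsLeadingTerm (f j) (Finsupp.single (z i) 1) := hij ▸ hflt i
    have := σ.lt_unique h1 (hflt j)
    exact Finsupp.single_left_injective one_ne_zero this
  -- coefficient of z i in f i is 1
  have hcoeff : ∀ i, MvPolynomial.coeff (Finsupp.single (z i) 1) (f i) = 1 := by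
    intro i
    obtain ⟨m, hm, hm1⟩ := hmonic (f i) (hfG i)
    rwa [σ.lt_unique (hflt i) hm]
  -- if z i occurs in g ∈ G then g = f i and the monomial is z i
  have hocc : ∀ g ∈ G, ∀ m ∈ g.support, ∀ i, m (z i) ≠ 0 →
      f i = g ∧ Finsupp.single (z i) 1 = m := by
    intro g hg m hm i hmi
    exact hred g hg m hm (f i) (hfG i) _ (hflt i) (single_le_of_ne hmi)
  refine ⟨f, G \ Set.range f, (Set.union_diff_cancel (Set.range_subset_iff.mpr hfG)).symm,
    hflt, ⟨hzinj, ?_, ?_⟩, ⟨⟨?_, ?_⟩, ?_, ?_⟩⟩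
  · intro i
    have hne : f i ≠ 0 := by
      intro h
      have := (hflt i).1
      simp [h] at this
    refine ⟨hne, by rw [hcoeff i]; exact one_ne_zero, ?_⟩
    rintro ⟨m, hm, hmz⟩
    rw [tailTo, hcoeff i, inv_one, one_smul] at hm
    by_cases hme : m = Finsupp.single (z i) 1
    · rw [MvPolynomial.mem_support_iff] at hm
      apply hm
      simp [hme, MvPolynomial.coeff_X', hcoeff i]
    · have hmf : m ∈ (f i).support := by
        rw [MvPolynomial.mem_support_iff] at hm ⊢
        intro h
        apply hm
        simp [MvPolynomial.coeff_sub, MvPolynomial.coeff_X', h, Ne.symm hme]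
      exact hme (hocc (f i) (hfG i) m hmf i hmz).2.symm
  · rintro i j hji ⟨m, hm, hmz⟩
    exact hji (hfinj (hocc (f j) (hfG j) m hm i hmz).1).symm
  · -- G' ⊆ elimSet
    rintro g ⟨hg, hgr⟩
    refine ⟨hGI hg, ?_⟩
    rintro i ⟨m, hm, hmz⟩
    exact hgr ⟨i, (hocc g hg m hm i hmz).1⟩
  · -- GB property on elimSet
    rintro h ⟨hhI, hhocc⟩ hne
    obtain ⟨g, hgG, mg, mh, hmg, hmh, hle⟩ := hGB h hhI hne
    refine ⟨g, ⟨hgG, ?_⟩, mg, mh, hmg, hmh, hle⟩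
    rintro ⟨i, rfl⟩
    have : mg = Finsupp.single (z i) 1 := σ.lt_unique hmg (hflt i)
    apply hhocc i
    refine ⟨mh, hmh.1, ?_⟩
    have := this ▸ hle
    have h1 : (1 : ℕ) ≤ mh (z i) := Finsupp.single_le_iff.mp this
    omega
  · exact fun g hg => hmonic g hg.1
  · exact fun g hg m hm g' hg' m' hm' hle => hred g hg.1 m hm g' hg'.1 m' hm' hle
end

section
/- Let I ⊆ M = ⟨x_1,...,x_n⟩ be an ideal, let Z be a set of s distinct indeterminates, and suppose I contains a coherently Z-separating tuple (f_1,...,f_s). If s = dim_K(Lin_M(I)), then edim(P/I) = n - s and the Z-separating re-embedding Φ: P/I → P̂/(I ∩ P̂) is an optimal re-embedding. -/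
open MvPolynomial

variable {K : Type*} [Field K] {n s : ℕ}

/-!
Substituting `z_j ↦ tail_{z_j}(f_j)` is the identity modulo `I`, because
`z_j - tail_{z_j}(f_j)` is a scalar multiple of `f_j`; since the tails involve no
indeterminate of `Z`, this yields the presentation `P/I ≅ P̂/(I ∩ P̂)` in `n - s`
indeterminates. Conversely, `p ↦ (linear coefficients of p) mod Lin_M(I)` is a surjective
point derivation `P/I → Kⁿ/Lin_M(I)` at the origin. Pulled back along any presentation
`K[y_1,...,y_m] ↠ P/I` it becomes a point derivation of a polynomial ring, which is
determined by its values on the `y_j`; hence `n - dim_K Lin_M(I) ≤ m`.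
-/

section PointDerivation
variable {R σ V : Type*} [CommRing R] [AddCommGroup V] [Module R V]

theorem mem_span_range_X_of_leibniz (χ : MvPolynomial σ R →ₐ[R] R)
    (D : MvPolynomial σ R →ₗ[R] V) (hD : ∀ p q, D (p * q) = χ p • D q + χ q • D p)
    (p : MvPolynomial σ R) : D p ∈ Submodule.span R (Set.range fun i => D (X i)) := by
  have hD1 : D 1 = 0 := by simpa using hD 1 1
  induction p using MvPolynomial.induction_on with
  | C a => rw [← mul_one (C a), ← smul_eq_C_mul, map_smul, hD1, smul_zero]; exact zero_mem _
  | add p q hp hq => exact map_add D p q ▸ add_mem hp hq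
  | mul_X p i hp =>
    rw [hD]
    exact add_mem (Submodule.smul_mem _ _ (Submodule.subset_span ⟨i, rfl⟩))
      (Submodule.smul_mem _ _ hp)

end PointDerivation

section LinearCoefficients
variable {σ : Type*}

noncomputable def linCoeff : MvPolynomial σ K →ₗ[K] (σ → K) :=
  LinearMap.pi fun i => lcoeff K (Finsupp.single i 1)

@[simp] theorem linCoeff_apply (p : MvPolynomial σ K) (i : σ) :
    linCoeff p i = coeff (Finsupp.single i 1) p := rfl

theorem linCoeff_X [DecidableEq σ] (i : σ) :
    linCoeff (X i : MvPolynomial σ K) = Pi.single i 1 := by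
  ext j
  simp [coeff_X, Pi.single_apply, Finsupp.single_left_inj one_ne_zero, eq_comm]

theorem linCoeff_mul (p q : MvPolynomial σ K) :
    linCoeff (p * q) = constantCoeff p • linCoeff q + constantCoeff q • linCoeff p := by
  classical
  ext i
  simp [coeff_mul, Finsupp.antidiagonal_single, Finset.Nat.antidiagonal_succ, constantCoeff_eq,
    mul_comm]

theorem linCoeff_surjective [Fintype σ] :
    Function.Surjective (linCoeff : MvPolynomial σ K → (σ → K)) := by
  classical
  intro v
  refine ⟨∑ i, v i • X i, ?_⟩
  simp [linCoeff_X, ← pi_eq_sum_univ']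

theorem linCoeff_homogeneousComponent_one (p : MvPolynomial σ K) :
    linCoeff (homogeneousComponent 1 p) = linCoeff p := by
  ext i
  simp [coeff_homogeneousComponent]

theorem MvPolynomial.IsHomogeneous.eq_zero_of_linCoeff_eq_zero {p : MvPolynomial σ K}
    (hp : p.IsHomogeneous 1) (h : linCoeff p = 0) : p = 0 := by
  ext d
  by_contra hd
  obtain ⟨i, rfl⟩ := (Finsupp.range_single_one (σ := σ)).symm.subset
    (show d.degree = 1 by rw [Finsupp.degree_eq_weight_one, ← Pi.one_def]; exact hp hd)
  exact hd (congrFun h i)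

theorem finrank_quotient_le_card_of_surjective [Fintype σ] {τ : Type*} [Fintype τ]
    {I : Ideal (MvPolynomial σ K)} {W : Submodule K (σ → K)}
    (hW : ∀ f ∈ I, linCoeff f ∈ W)
    (φ : MvPolynomial τ K →ₐ[K] MvPolynomial σ K ⧸ I) (hφ : Function.Surjective φ) :
    Module.finrank K ((σ → K) ⧸ W) ≤ Fintype.card τ := by
  set D₀ : MvPolynomial σ K →ₗ[K] (σ → K) ⧸ W := W.mkQ ∘ₗ linCoeff
  have hD₀ : ∀ p q, p - q ∈ I → D₀ p = D₀ q := fun p q h => by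
    simpa [D₀, Submodule.Quotient.eq] using hW _ h
  choose g hg using fun j => Ideal.Quotient.mk_surjective (φ (X j))
  set ψ : MvPolynomial τ K →ₐ[K] MvPolynomial σ K := aeval g
  have hψ : (Ideal.Quotient.mkₐ K I).comp ψ = φ := algHom_ext fun j => by simp [ψ, hg]
  set D := D₀ ∘ₗ ψ.toLinearMap
  set χ := (aeval (0 : σ → K)).comp ψ
  have hD : ∀ p q, D (p * q) = χ p • D q + χ q • D p := by
    intro p q
    simp [D, D₀, χ, linCoeff_mul]
  have hsurj : Function.Surjective D := by
    intro v
    obtain ⟨p, rfl⟩ := (W.mkQ_surjective.comp linCoeff_surjective) v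
    obtain ⟨q, hq⟩ := hφ (Ideal.Quotient.mk I p)
    refine ⟨q, hD₀ _ _ (Ideal.Quotient.eq.mp ?_)⟩
    rw [← hq, ← hψ]; rfl
  refine finrank_le_of_span_eq_top (v := fun j => D (X j)) (eq_top_iff.mpr fun v _ => ?_)
  obtain ⟨p, rfl⟩ := hsurj v
  exact mem_span_range_X_of_leibniz χ D hD p

end LinearCoefficients

section LinearPart

theorem linSpace_le_homogeneousSubmodule (I : Ideal (MvPolynomial (Fin n) K)) :
    linSpace 0 I ≤ homogeneousSubmodule (Fin n) K 1 := by
  rw [linSpace, Submodule.span_le]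
  rintro _ ⟨f, -, rfl⟩
  simpa [linPart] using homogeneousComponent_isHomogeneous 1 f

theorem linCoeff_mem_map_linSpace {I : Ideal (MvPolynomial (Fin n) K)}
    {f : MvPolynomial (Fin n) K} (hf : f ∈ I) : linCoeff f ∈ (linSpace 0 I).map linCoeff :=
  ⟨linPart 0 f, Submodule.subset_span ⟨f, hf, rfl⟩, by
    simp [linPart, linCoeff_homogeneousComponent_one]⟩

theorem finrank_map_linCoeff_linSpace (I : Ideal (MvPolynomial (Fin n) K)) :
    Module.finrank K ((linSpace 0 I).map linCoeff) = Module.finrank K (linSpace 0 I) := by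
  rw [← LinearMap.range_domRestrict]
  refine LinearMap.finrank_range_of_inj (LinearMap.ker_eq_bot.mp ((Submodule.eq_bot_iff _).mpr ?_))
  rintro ⟨g, hg⟩ hg0
  exact Subtype.ext (((mem_homogeneousSubmodule 1 g).mp
    (linSpace_le_homogeneousSubmodule I hg)).eq_zero_of_linCoeff_eq_zero hg0)

theorem sub_finrank_linSpace_le {I : Ideal (MvPolynomial (Fin n) K)} {m : ℕ}
    {I' : Ideal (MvPolynomial (Fin m) K)}
    (e : (MvPolynomial (Fin n) K ⧸ I) ≃ₐ[K] (MvPolynomial (Fin m) K ⧸ I')) :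
    n - Module.finrank K (linSpace 0 I) ≤ m := by
  have h := finrank_quotient_le_card_of_surjective (fun _ => linCoeff_mem_map_linSpace)
    (e.symm.toAlgHom.comp (Ideal.Quotient.mkₐ K I'))
    (e.symm.surjective.comp (Ideal.Quotient.mkₐ_surjective K I'))
  rwa [Submodule.finrank_quotient, finrank_map_linCoeff_linSpace, Module.finrank_fin_fun,
    Fintype.card_fin] at h

end LinearPart

theorem edim_eq_card_of_algEquiv {R : Type*} [CommRing R] [Algebra K R] {τ : Type*} [Fintype τ]
    {J : Ideal (MvPolynomial τ K)} (e : R ≃ₐ[K] MvPolynomial τ K ⧸ J)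
    (h : ∀ m (I' : Ideal (MvPolynomial (Fin m) K)),
      (R ≃ₐ[K] MvPolynomial (Fin m) K ⧸ I') → Fintype.card τ ≤ m) :
    edim K R = Fintype.card τ := by
  let ρ := renameEquiv K (Fintype.equivFin τ)
  have e' := e.trans (Ideal.quotientEquivAlg J (J.map ρ) ρ rfl)
  exact le_antisymm (Nat.sInf_le ⟨_, ⟨e'⟩⟩)
    (le_csInf ⟨_, _, ⟨e'⟩⟩ fun m ⟨I', ⟨e''⟩⟩ => h m I' e'')

section Reembedding
variable {z : Fin s → Fin n} {f : Fin s → MvPolynomial (Fin n) K}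

theorem killZ_X_of_not_mem_range {i : Fin n} (h : ¬ ∃ j, z j = i) :
    killZ z (X i : MvPolynomial (Fin n) K) = X ⟨i, h⟩ := by
  classical
  rw [killZ, aeval_X, dif_neg h]

theorem killZ_rename (q : MvPolynomial {i : Fin n // ¬ ∃ j, z j = i} K) :
    killZ z (rename Subtype.val q) = q := by
  have h : (killZ z).comp (rename Subtype.val) = AlgHom.id K _ :=
    algHom_ext fun i => by simp [killZ_X_of_not_mem_range i.2]
  exact AlgHom.congr_fun h q

theorem rename_killZ_of_forall_not_occurs {g : MvPolynomial (Fin n) K}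
    (hg : ∀ j, ¬ Occurs (z j) g) : rename Subtype.val (killZ z g) = g := by
  have hvars :
      ↑g.vars ⊆ Set.range (Subtype.val : {i : Fin n // ¬ ∃ j, z j = i} → Fin n) := by
    intro i hi
    refine ⟨⟨i, ?_⟩, rfl⟩
    rintro ⟨j, rfl⟩
    obtain ⟨d, hd, hdi⟩ := (mem_vars_iff_mem_support _).mp hi
    exact hg j ⟨d, hd, Finsupp.mem_support_iff.mp hdi⟩
  obtain ⟨q, rfl⟩ := exists_rename_eq_of_vars_subset_range g _ Subtype.val_injective hvars
  rw [killZ_rename]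

theorem CoherentlySeparating.not_occurs_tailTo (hcs : CoherentlySeparating z f) (j k : Fin s) :
    ¬ Occurs (z k) (tailTo (f j) (z j)) := by
  obtain rfl | hkj := eq_or_ne k j
  · exact (hcs.2.1 k).2.2
  rintro ⟨d, hd, hdz⟩
  rcases Finset.mem_union.mp (support_sub _ _ _ hd) with hdX | hdf
  · rw [support_X, Finset.mem_singleton] at hdX
    subst hdX
    exact hdz (Finsupp.single_eq_of_ne' fun h => hkj (hcs.1 h.symm))
  · exact hcs.2.2 k j hkj.symm ⟨d, support_smul hdf, hdz⟩

noncomputable def separatingSubst (z : Fin s → Fin n) (f : Fin s → MvPolynomial (Fin n) K) :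
    MvPolynomial (Fin n) K →ₐ[K] MvPolynomial {i : Fin n // ¬ ∃ j, z j = i} K :=
  (killZ z).comp (aeval (subMap z f))

theorem separatingSubst_rename (q : MvPolynomial {i : Fin n // ¬ ∃ j, z j = i} K) :
    separatingSubst z f (rename Subtype.val q) = q := by
  classical
  have h : (aeval (subMap z f)).comp (rename Subtype.val) =
      rename (Subtype.val : {i : Fin n // ¬ ∃ j, z j = i} → Fin n) :=
    algHom_ext fun i => by simp [subMap, dif_neg i.2]
  rw [separatingSubst, AlgHom.comp_apply, ← AlgHom.comp_apply _ (rename _), h, killZ_rename]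

theorem CoherentlySeparating.X_sub_rename_separatingSubst_mem (hcs : CoherentlySeparating z f)
    {I : Ideal (MvPolynomial (Fin n) K)} (hf : ∀ j, f j ∈ I) (i : Fin n) :
    X i - rename Subtype.val (separatingSubst z f (X i)) ∈ I := by
  classical
  by_cases h : ∃ j, z j = i
  · obtain ⟨j, rfl⟩ := h
    rw [separatingSubst, AlgHom.comp_apply, aeval_X, subMap_apply_of_injective hcs.1,
      rename_killZ_of_forall_not_occurs (hcs.not_occurs_tailTo j), tailTo, sub_sub_cancel,
      smul_eq_C_mul]
    exact I.mul_mem_left _ (hf j)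
  · simp [separatingSubst, subMap, dif_neg h, killZ_X_of_not_mem_range h]

theorem CoherentlySeparating.mk_rename_separatingSubst (hcs : CoherentlySeparating z f)
    {I : Ideal (MvPolynomial (Fin n) K)} (hf : ∀ j, f j ∈ I) (p : MvPolynomial (Fin n) K) :
    Ideal.Quotient.mk I (rename Subtype.val (separatingSubst z f p)) = Ideal.Quotient.mk I p := by
  have h : (Ideal.Quotient.mkₐ K I).comp ((rename Subtype.val).comp (separatingSubst z f)) =
      Ideal.Quotient.mkₐ K I :=
    algHom_ext fun i => Ideal.Quotient.eq.mpr (by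
      simpa using neg_mem (hcs.X_sub_rename_separatingSubst_mem hf i))
  exact AlgHom.congr_fun h p

theorem reembedHom_apply (I : Ideal (MvPolynomial (Fin n) K)) (p : MvPolynomial (Fin n) K) :
    reembedHom z f I p = Ideal.Quotient.mk (elimIdeal z I) (separatingSubst z f p) := rfl

theorem reembedHom_surjective (z : Fin s → Fin n) (f : Fin s → MvPolynomial (Fin n) K)
    (I : Ideal (MvPolynomial (Fin n) K)) : Function.Surjective (reembedHom z f I) := by
  rintro ⟨q⟩
  exact ⟨rename Subtype.val q, by rw [reembedHom_apply, separatingSubst_rename]; rfl⟩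

theorem CoherentlySeparating.ker_reembedHom (hcs : CoherentlySeparating z f)
    {I : Ideal (MvPolynomial (Fin n) K)} (hf : ∀ j, f j ∈ I) :
    RingHom.ker (reembedHom z f I) = I := by
  ext p
  rw [RingHom.mem_ker, reembedHom_apply, Ideal.Quotient.eq_zero_iff_mem]
  change rename Subtype.val (separatingSubst z f p) ∈ I ↔ p ∈ I
  rw [← Ideal.Quotient.eq_zero_iff_mem, hcs.mk_rename_separatingSubst hf,
    Ideal.Quotient.eq_zero_iff_mem]

/-- The `Z`-separating re-embedding `Φ : P/I ≅ P̂/(I ∩ P̂)`. -/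
noncomputable def CoherentlySeparating.reembedEquiv (hcs : CoherentlySeparating z f)
    {I : Ideal (MvPolynomial (Fin n) K)} (hf : ∀ j, f j ∈ I) :
    (MvPolynomial (Fin n) K ⧸ I) ≃ₐ[K]
      (MvPolynomial {i : Fin n // ¬ ∃ j, z j = i} K ⧸ elimIdeal z I) :=
  (Ideal.quotientEquivAlgOfEq K (hcs.ker_reembedHom hf).symm).trans
    (Ideal.quotientKerAlgEquivOfSurjective
      (f := (Ideal.Quotient.mkₐ K (elimIdeal z I)).comp (separatingSubst z f))
      (reembedHom_surjective z f I))

theorem card_compl_range_of_injective (hz : Function.Injective z) :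
    Fintype.card {i : Fin n // ¬ ∃ j, z j = i} = n - s := by
  rw [Fintype.card_subtype_compl, Fintype.card_fin]
  congr
  convert (Set.card_range_of_injective hz).trans (Fintype.card_fin s) using 3
  rfl

end Reembedding

theorem statement16_general (z : Fin s → Fin n) (f : Fin s → MvPolynomial (Fin n) K)
    (I : Ideal (MvPolynomial (Fin n) K))
    (hfI : ∀ i, f i ∈ I ∧ f i ≠ 0)
    (hcs : CoherentlySeparating z f)
    (hs : s = Module.finrank K ↥(linSpace (0 : Fin n → K) I)) :
    edim K (MvPolynomial (Fin n) K ⧸ I) = n - s ∧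
    RingHom.ker (reembedHom z f I) = I ∧
    Function.Surjective (reembedHom z f I) := by
  have hf : ∀ i, f i ∈ I := fun i => (hfI i).1
  refine ⟨?_, hcs.ker_reembedHom hf, reembedHom_surjective z f I⟩
  rw [← card_compl_range_of_injective hcs.1]
  refine edim_eq_card_of_algEquiv (hcs.reembedEquiv hf) fun m I' e => ?_
  rw [card_compl_range_of_injective hcs.1, hs]
  exact sub_finrank_linSpace_le e

/-- If `I ⊆ M = ⟨x_1,...,x_n⟩` contains a coherently
`Z`-separating tuple `(f_1,...,f_s)` with `s = dim_K Lin_M(I)`, then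
`edim(P/I) = n - s` and the `Z`-separating re-embedding
`Φ : P/I → P̂/(I ∩ P̂)` is an optimal re-embedding. -/
theorem statement16 (z : Fin s → Fin n) (f : Fin s → MvPolynomial (Fin n) K)
    (I : Ideal (MvPolynomial (Fin n) K)) (hI : I ≤ linMaxIdeal (0 : Fin n → K))
    (hfI : ∀ i, f i ∈ I ∧ f i ≠ 0)
    (hcs : CoherentlySeparating z f)
    (hs : s = Module.finrank K ↥(linSpace (0 : Fin n → K) I)) :
    edim K (MvPolynomial (Fin n) K ⧸ I) = n - s ∧
    RingHom.ker (reembedHom z f I) = I ∧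
    Function.Surjective (reembedHom z f I) :=
  statement16_general z f I hfI hcs hs
end
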